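/- Every subspace L_{a,b} is contained in the affine Fermat cone {x ∈ ℂ^{n+2} : x_0^d + x_1^d + ⋯ + x_{n+1}^d = 0}, and the number of distinct linear subspaces of ℂ^{n+2} of the form L_{a,b}, as a ranges over {0,1,…,d−1}^{n/2+1} and b over all permutations of {0,1,…,n+1}, equals (n+1)·(n−1)·⋯·3·1·d^{n/2+1}. -/

import Mathlib

/-!
Write `β (e, k) = b (2e + k)`, so that `L_{a,b}` is cut out by `x_{β(e,0)} = c_e x_{β(e,1)}`
with `c_e = ζ^{1+2a_e}`. On each pair `x_{β(e,0)}^d + x_{β(e,1)}^d = (c_e^d + 1) x_{β(e,1)}^d`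
and `c_e^d = (-1)^{1+2a_e} = -1`, which gives the Fermat equation.

For the count, relabelling the pairs by `π ∈ S_{n/2+1}` and reversing some of them
(which replaces `c_e` by `c_e⁻¹ = ζ^{1+2(d-1-a_e)}`) does not change `L_{a,b}`. Conversely the
vector `c_e δ_{β(e,0)} + δ_{β(e,1)}` of `L_{a,b}` lies in `L_{a',b'}` only if `{β(e,0), β(e,1)}`
is a pair of `β'` with the matching coefficient. So the group of order `(n/2+1)! 2^{n/2+1}`
acts freely on the parameters with the fibres of `(a, b) ↦ L_{a,b}` as orbits, and
`#{L_{a,b}} (n/2+1)! 2^{n/2+1} = d^{n/2+1} (n+2)! = d^{n/2+1} (n+1)!! (n/2+1)! 2^{n/2+1}`.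
-/

open Finset Matrix

/-- `ζ_{2d} = exp(2πi/(2d))`. -/
noncomputable def zeta2d (d : ℕ) : ℂ :=
  Complex.exp (2 * Real.pi * Complex.I / (2 * (d : ℂ)))

/-- The even-position index `2e` in `{0,…,n+1}` (with `n = 2h`). -/
def evIdx (h : ℕ) (e : Fin (h + 1)) : Fin (2 * h + 2) :=
  ⟨2 * e.1, by have := e.isLt; omega⟩

/-- The odd-position index `2e+1` in `{0,…,n+1}` (with `n = 2h`). -/
def odIdx (h : ℕ) (e : Fin (h + 1)) : Fin (2 * h + 2) :=
  ⟨2 * e.1 + 1, by have := e.isLt; omega⟩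

/-- The index set `I_N`: tuples `(i_0,…,i_{n+1})` with `0 ≤ i_e ≤ d-2` and `∑ i_e = N`,
for `n = 2h` even. -/
abbrev IdxSet (h d N : ℕ) : Type :=
  {i : Fin (2 * h + 2) → Fin (d - 1) // ∑ e, (i e).1 = N}

/-- The period vector `p^{a,b}` of the linear cycle `ℙ^{n/2}_{a,b}` in the Fermat variety,
extended by zero to all integer tuples. -/
noncomputable def pvec (h d : ℕ) (a : Fin (h + 1) → ℕ) (b : Equiv.Perm (Fin (2 * h + 2)))
    (i : Fin (2 * h + 2) → ℕ) : ℂ :=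
  if ∀ e : Fin (h + 1), i (b (evIdx h e)) + i (b (odIdx h e)) = d - 2 then
    zeta2d d ^ (∑ e : Fin (h + 1), (i (b (evIdx h e)) + 1) * (1 + 2 * a e))
  else 0

/-- The period matrix `[p_{i+j}]` with rows indexed by `I_{(n/2)d-n-2}` and columns by `I_d`. -/
noncomputable def pmat (h d : ℕ) (p : (Fin (2 * h + 2) → ℕ) → ℂ) :
    Matrix (IdxSet h d (h * d - (2 * h + 2))) (IdxSet h d d) ℂ :=
  Matrix.of fun i j => p fun e => (i.1 e).1 + (j.1 e).1

/-- The period vector `P` of the linear cycle with `a = (0,…,0)` and `b = id`. -/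
noncomputable def Pvec (h d : ℕ) : (Fin (2 * h + 2) → ℕ) → ℂ :=
  pvec h d (fun _ => 0) (Equiv.refl _)

/-- The period vector `P̌_m` (with `μ = m+1`): `a` has first `μ` entries `0`, the rest `1`,
and `b = id`. -/
noncomputable def PcheckVec (h d μ : ℕ) : (Fin (2 * h + 2) → ℕ) → ℂ :=
  pvec h d (fun e => if e.1 < μ then 0 else 1) (Equiv.refl _)

/-- The combinatorial constant `C_{α_1,…,α_s}`. -/
def Ccoef (n d : ℕ) {s : ℕ} (α : Fin s → ℕ) : ℤ :=
  ((n + 1 + d).choose (n + 1) : ℤ) -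
    ∑ k ∈ Finset.Icc 1 s, (-1 : ℤ) ^ (k - 1) *
      ∑ T ∈ Finset.univ.filter (fun T : Finset (Fin s) => T.card = k ∧ ∑ i ∈ T, α i ≤ d),
        (((n + 1 + d - ∑ i ∈ T, α i).choose (n + 1) : ℤ))

/-- The sequence `x^s, y^t` (x repeated s times followed by y repeated t times). -/
def twoBlock (x y s t : ℕ) : Fin (s + t) → ℕ := fun i => if i.1 < s then x else y

/-- `K^d_n(m) = 2·C_{1^{n/2+1},(d-1)^{n/2+1}} − C_{1^{n−m+1},(d−1)^{m+1}}`, with `n = 2h`,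
`μ = m+1`. -/
def Kdef (h d μ : ℕ) : ℤ :=
  2 * Ccoef (2 * h) d (twoBlock 1 (d - 1) (h + 1) (h + 1)) -
    Ccoef (2 * h) d (twoBlock 1 (d - 1) (2 * h + 2 - μ) μ)

/-- The linear subspace `L_{a,b} ⊆ ℂ^{n+2}` cut out by the equations
`x_{b_{2e}} − ζ_{2d}^{1+2a_{2e+1}}·x_{b_{2e+1}} = 0` for `e = 0,…,n/2`. -/
noncomputable def Lsub (h d : ℕ) (a : Fin (h + 1) → ℕ) (b : Equiv.Perm (Fin (2 * h + 2))) :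
    Submodule ℂ (Fin (2 * h + 2) → ℂ) :=
  ⨅ e : Fin (h + 1), LinearMap.ker
    ((LinearMap.proj (R := ℂ) (φ := fun _ : Fin (2 * h + 2) => ℂ) (b (evIdx h e)))
      - zeta2d d ^ (1 + 2 * a e) •
        (LinearMap.proj (R := ℂ) (φ := fun _ : Fin (2 * h + 2) => ℂ) (b (odIdx h e))))


open Function

section PairSubspace

variable {K ι κ : Type*} [Field K]

def pairSubspace (c : ι → K) (β : ι × Fin 2 ≃ κ) : Submodule K (κ → K) :=
  ⨅ e, LinearMap.ker (LinearMap.proj (β (e, 0)) - c e • LinearMap.proj (β (e, 1)))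

theorem mem_pairSubspace {c : ι → K} {β : ι × Fin 2 ≃ κ} {x : κ → K} :
    x ∈ pairSubspace c β ↔ ∀ e, x (β (e, 0)) = c e * x (β (e, 1)) := by
  simp [pairSubspace, sub_eq_zero]

def orient {α : Type*} (r : α → α) (k : Fin 2) (a : α) : α := if k = 0 then a else r a

theorem orient_orient {α : Type*} {r : α → α} (hr : Involutive r) (j k : Fin 2) (a : α) :
    orient r j (orient r k a) = orient r (j + k) a := by
  fin_cases j <;> fin_cases k <;> simp [orient, hr a]

theorem orient_inv_ne_zero {u : K} (hu : u ≠ 0) (k : Fin 2) : orient Inv.inv k u ≠ 0 := by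
  unfold orient
  split_ifs <;> simp [hu]

theorem mem_pairSubspace_iff_forall_orient {c : ι → K} (hc : ∀ e, c e ≠ 0)
    {β : ι × Fin 2 ≃ κ} {x : κ → K} :
    x ∈ pairSubspace c β ↔
      ∀ p : ι × Fin 2, x (β p) = orient Inv.inv p.2 (c p.1) * x (β (p.1, p.2 + 1)) := by
  rw [mem_pairSubspace]
  refine ⟨fun H ⟨e, k⟩ => ?_, fun H e => H (e, 0)⟩
  fin_cases k
  · exact H e
  · simp [orient, H e, hc e]

def pairShear (π : Equiv.Perm ι) (ε : ι → Fin 2) : Equiv.Perm (ι × Fin 2) :=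
  Equiv.prodShear π fun e => Equiv.addRight (ε e)

@[simp]
theorem pairShear_apply (π : Equiv.Perm ι) (ε : ι → Fin 2) (p : ι × Fin 2) :
    pairShear π ε p = (π p.1, p.2 + ε p.1) :=
  rfl

def twist {α : Type*} (r : α → α) (π : Equiv.Perm ι) (ε : ι → Fin 2) (a : ι → α) :
    ι → α := fun e => orient r (ε e) (a (π e))

theorem pairSubspace_pairShear {c : ι → K} (hc : ∀ e, c e ≠ 0) (β : ι × Fin 2 ≃ κ)
    (π : Equiv.Perm ι) (ε : ι → Fin 2) :
    pairSubspace (twist Inv.inv π ε c) ((pairShear π ε).trans β) = pairSubspace c β := by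
  have hc' (e : ι) : twist Inv.inv π ε c e ≠ 0 := orient_inv_ne_zero (hc (π e)) (ε e)
  ext x
  rw [mem_pairSubspace_iff_forall_orient hc, mem_pairSubspace_iff_forall_orient hc']
  refine Iff.trans (forall_congr' fun p => ?_) (pairShear π ε).forall_congr_right
  simp only [Equiv.trans_apply, pairShear_apply, twist, orient_orient inv_involutive,
    add_right_comm _ (1 : Fin 2)]

theorem single_add_single_mem_pairSubspace [DecidableEq κ] (c : ι → K) (β : ι × Fin 2 ≃ κ)
    (e : ι) : Pi.single (β (e, 0)) (c e) + Pi.single (β (e, 1)) 1 ∈ pairSubspace c β := by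
  rw [mem_pairSubspace]
  intro e'
  by_cases he : e' = e
  · subst he
    simp [β.injective.eq_iff]
  · simp [β.injective.eq_iff, he]

-- The equation of the pair containing `j` forces the partner of `j` to be `i`.
theorem exists_eq_of_single_add_single_mem_pairSubspace [DecidableEq κ] {c : ι → K}
    (hc : ∀ e, c e ≠ 0) {β : ι × Fin 2 ≃ κ} {i j : κ} (hij : i ≠ j) {u : K}
    (hv : Pi.single i u + Pi.single j 1 ∈ pairSubspace c β) :
    ∃ p : ι × Fin 2, β p = i ∧ β (p.1, p.2 + 1) = j ∧ u = orient Inv.inv p.2 (c p.1) := by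
  set v : κ → K := Pi.single i u + Pi.single j 1
  obtain ⟨⟨e, k⟩, rfl⟩ := β.surjective j
  have hk : k + 1 + 1 = k := by fin_cases k <;> rfl
  have hvj : v (β (e, k)) = 1 := by simp [v, hij.symm]
  have hvp : v (β (e, k + 1)) = orient Inv.inv (k + 1) (c e) := by
    simpa [hk, hvj] using (mem_pairSubspace_iff_forall_orient hc).1 hv (e, k + 1)
  have hne : β (e, k + 1) ≠ β (e, k) := by simp [β.injective.eq_iff]
  have hpi : β (e, k + 1) = i := by
    by_contra hpi
    have : v (β (e, k + 1)) = 0 := by simp [v, hpi, hne]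
    exact orient_inv_ne_zero (hc e) (k + 1) (hvp ▸ this)
  refine ⟨(e, k + 1), hpi, by simp [hk], ?_⟩
  simpa [v, ← hpi, hne] using hvp

theorem exists_pairShear_eq [Finite ι] {σ : Equiv.Perm (ι × Fin 2)}
    (hσ : ∀ e, σ (e, 1) = ((σ (e, 0)).1, (σ (e, 0)).2 + 1)) :
    ∃ π ε, σ = pairShear π ε := by
  have hsurj : Surjective fun e => (σ (e, 0)).1 := by
    intro e
    obtain ⟨⟨e', k⟩, hk⟩ := σ.surjective (e, 0)
    obtain rfl | rfl : k = 0 ∨ k = 1 := by fin_cases k <;> simp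
    · exact ⟨e', congrArg Prod.fst hk⟩
    · exact ⟨e', (congrArg Prod.fst (hσ e')).symm.trans (congrArg Prod.fst hk)⟩
  refine ⟨Equiv.ofBijective _ (Finite.surjective_iff_bijective.1 hsurj),
    fun e => (σ (e, 0)).2, ?_⟩
  ext ⟨e, k⟩ : 1
  fin_cases k
  · simp
  · simp [hσ, add_comm]

theorem pairSubspace_eq_pairSubspace_iff [Finite ι] {c : ι → K} (hc : ∀ e, c e ≠ 0)
    (c' : ι → K) (β β' : ι × Fin 2 ≃ κ) :
    pairSubspace c' β' = pairSubspace c β ↔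
      ∃ π ε, β' = (pairShear π ε).trans β ∧ c' = twist Inv.inv π ε c := by
  classical
  refine ⟨fun hL => ?_, by rintro ⟨π, ε, rfl, rfl⟩; exact pairSubspace_pairShear hc β π ε⟩
  have hpair (e : ι) : ∃ p : ι × Fin 2, β p = β' (e, 0) ∧ β (p.1, p.2 + 1) = β' (e, 1) ∧
      c' e = orient Inv.inv p.2 (c p.1) := by
    refine exists_eq_of_single_add_single_mem_pairSubspace hc (by simp [β'.injective.eq_iff]) ?_
    exact hL ▸ single_add_single_mem_pairSubspace c' β' e
  choose p hpβ hpβ' hpc using hpair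
  set σ := β'.trans β.symm
  have hσ0 (e : ι) : σ (e, 0) = p e := by simp [σ, ← hpβ]
  obtain ⟨π, ε, hσ⟩ := exists_pairShear_eq (σ := σ) fun e => by simp [σ, hσ0, ← hpβ']
  have hp (e : ι) : p e = (π e, ε e) := by simp [← hσ0, hσ]
  refine ⟨π, ε, ?_, funext fun e => by simp [hpc, hp, twist]⟩
  rw [← hσ]
  ext
  simp [σ]

theorem comp_twist {A : Type*} {w : A → K} {r : A → A} (hr : ∀ a, w (r a) = (w a)⁻¹)
    (π : Equiv.Perm ι) (ε : ι → Fin 2) (a : ι → A) :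
    w ∘ twist r π ε a = twist Inv.inv π ε (w ∘ a) := by
  ext e
  simp only [Function.comp_apply, twist, orient]
  split_ifs <;> simp [hr]

theorem sum_pow_eq_zero_of_mem_pairSubspace [Fintype ι] [Fintype κ] {c : ι → K} {n : ℕ}
    (hc : ∀ e, c e ^ n = -1) {β : ι × Fin 2 ≃ κ} {x : κ → K}
    (hx : x ∈ pairSubspace c β) :
    ∑ i, x i ^ n = 0 := by
  rw [← β.sum_comp, Fintype.sum_prod_type]
  refine sum_eq_zero fun e _ => ?_
  rw [Fin.sum_univ_two, mem_pairSubspace.1 hx e, mul_pow, hc]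
  ring

end PairSubspace

theorem ncard_range_mul_card_of_free_action {α β G : Type*} [Fintype α] [Fintype G]
    (f : α → β) (act : G → α → α) (hfiber : ∀ x y, f y = f x ↔ ∃ g, act g x = y)
    (hfree : ∀ x, Injective fun g => act g x) :
    (Set.range f).ncard * Fintype.card G = Fintype.card α := by
  classical
  have hfiber_card (x : α) : #{y | f y = f x} = Fintype.card G := by
    rw [← card_univ, ← card_image_of_injective univ (hfree x)]
    congr 1
    ext y
    simp [hfiber]
  rw [← Set.image_univ, ← coe_univ, ← coe_image, Set.ncard_coe_finset,
    ← card_univ (α := α), card_eq_sum_card_image f univ]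
  refine (sum_const_nat fun b hb => ?_).symm
  obtain ⟨x, -, rfl⟩ := mem_image.1 hb
  exact hfiber_card x

section Count

variable {K ι κ A : Type*} [Field K] [Fintype ι] [DecidableEq ι] [Fintype κ] [DecidableEq κ]
  [Fintype A]

theorem ncard_range_pairSubspace_mul {w : A → K} (hw : Injective w) (hw0 : ∀ a, w a ≠ 0)
    {r : A → A} (hr : ∀ a, w (r a) = (w a)⁻¹) :
    (Set.range fun t : (ι → A) × (ι × Fin 2 ≃ κ) => pairSubspace (w ∘ t.1) t.2).ncard *
        (Nat.factorial (Fintype.card ι) * 2 ^ Fintype.card ι) =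
      Fintype.card A ^ Fintype.card ι * Fintype.card (ι × Fin 2 ≃ κ) := by
  have hcount := ncard_range_mul_card_of_free_action (G := Equiv.Perm ι × (ι → Fin 2))
    (fun t : (ι → A) × (ι × Fin 2 ≃ κ) => pairSubspace (w ∘ t.1) t.2)
    (fun g t => (twist r g.1 g.2 t.1, (pairShear g.1 g.2).trans t.2)) ?_ ?_
  · simpa [Fintype.card_perm] using hcount
  · rintro ⟨a, β⟩ ⟨a', β'⟩
    dsimp only
    rw [pairSubspace_eq_pairSubspace_iff (c := w ∘ a) (fun e => hw0 (a e))]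
    simp only [← comp_twist hr, hw.comp_left.eq_iff, Prod.exists, Prod.mk.injEq]
    exact exists₂_congr fun π ε => and_comm.trans (and_congr eq_comm eq_comm)
  · rintro ⟨a, β⟩ ⟨π, ε⟩ ⟨π', ε'⟩ h
    have h0 (e : ι) : (π e, ε e) = (π' e, ε' e) := by
      simpa using β.injective (DFunLike.congr_fun (congrArg Prod.snd h) (e, 0))
    exact Prod.ext (Equiv.ext fun e => congrArg Prod.fst (h0 e))
      (funext fun e => congrArg Prod.snd (h0 e))

end Count

namespace IsPrimitiveRoot

variable {K : Type*} [Field K] {ζ : K} {d : ℕ}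

theorem pow_odd_injective (hζ : IsPrimitiveRoot ζ (2 * d)) :
    Injective fun a : Fin d => ζ ^ (1 + 2 * (a : ℕ)) := by
  intro a b hab
  have := hζ.pow_inj (by omega) (by omega) hab
  exact Fin.ext (by omega)

theorem pow_odd_ne_zero (hζ : IsPrimitiveRoot ζ (2 * d)) (a : Fin d) :
    ζ ^ (1 + 2 * (a : ℕ)) ≠ 0 :=
  pow_ne_zero _ (hζ.ne_zero (by have := a.pos; omega))

theorem pow_odd_rev (hζ : IsPrimitiveRoot ζ (2 * d)) (a : Fin d) :
    ζ ^ (1 + 2 * (a.rev : ℕ)) = (ζ ^ (1 + 2 * (a : ℕ)))⁻¹ := by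
  refine eq_inv_of_mul_eq_one_left ?_
  rw [← pow_add, Fin.val_rev, show 1 + 2 * (d - (a + 1)) + (1 + 2 * a) = 2 * d by omega]
  exact hζ.pow_eq_one

theorem pow_odd_pow_eq_neg_one (hζ : IsPrimitiveRoot ζ (2 * d)) (a : Fin d) :
    (ζ ^ (1 + 2 * (a : ℕ))) ^ d = -1 := by
  have hd : ζ ^ d = -1 :=
    (hζ.pow (by have := a.pos; omega) (mul_comm 2 d)).eq_neg_one_of_two_right
  rw [← pow_mul, mul_comm, pow_mul, hd, Odd.neg_one_pow ⟨a, by ring⟩]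

end IsPrimitiveRoot

theorem isPrimitiveRoot_zeta2d {d : ℕ} (hd : d ≠ 0) : IsPrimitiveRoot (zeta2d d) (2 * d) := by
  rw [zeta2d, show 2 * (d : ℂ) = ((2 * d : ℕ) : ℂ) by push_cast; ring]
  exact Complex.isPrimitiveRoot_exp _ (by omega)

def pairIndex (h : ℕ) : Fin (h + 1) × Fin 2 ≃ Fin (2 * h + 2) :=
  finProdFinEquiv.trans (finCongr (by ring))

theorem Lsub_eq_pairSubspace (h d : ℕ) (a : Fin (h + 1) → ℕ)
    (b : Equiv.Perm (Fin (2 * h + 2))) :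
    Lsub h d a b = pairSubspace (fun e => zeta2d d ^ (1 + 2 * a e)) ((pairIndex h).trans b) := by
  have h0 (e : Fin (h + 1)) : pairIndex h (e, 0) = evIdx h e :=
    Fin.ext (by simp [pairIndex, evIdx])
  have h1 (e : Fin (h + 1)) : pairIndex h (e, 1) = odIdx h e :=
    Fin.ext (by simp [pairIndex, odIdx]; ring)
  simp only [Lsub, pairSubspace, Equiv.trans_apply, h0, h1]

theorem setOf_Lsub_eq_range_pairSubspace (h d : ℕ) :
    {W | ∃ (a : Fin (h + 1) → Fin d) (b : Equiv.Perm (Fin (2 * h + 2))),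
        W = Lsub h d (fun e => (a e : ℕ)) b} =
      Set.range fun t : (Fin (h + 1) → Fin d) × (Fin (h + 1) × Fin 2 ≃ Fin (2 * h + 2)) =>
        pairSubspace ((fun a : Fin d => zeta2d d ^ (1 + 2 * (a : ℕ))) ∘ t.1) t.2 := by
  ext W
  simp only [Lsub_eq_pairSubspace, Set.mem_ofPred_eq, Set.mem_range, Prod.exists]
  constructor
  · rintro ⟨a, b, rfl⟩
    exact ⟨a, _, rfl⟩
  · rintro ⟨a, β, rfl⟩
    refine ⟨a, (pairIndex h).symm.trans β, ?_⟩
    rw [← Equiv.trans_assoc, Equiv.self_trans_symm, Equiv.refl_trans]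
    rfl

theorem prod_odd_mul_factorial_mul_two_pow (n : ℕ) :
    (∏ e : Fin n, (2 * (e : ℕ) + 1)) * (n.factorial * 2 ^ n) = (2 * n).factorial := by
  induction n with
  | zero => simp
  | succ n ih =>
    rw [Fin.prod_univ_castSucc, show 2 * (n + 1) = 2 * n + 1 + 1 by ring, Nat.factorial_succ,
      Nat.factorial_succ, Nat.factorial_succ, ← ih]
    simp only [Fin.val_castSucc, Fin.val_last]
    ring

theorem linear_cycles_in_fermat_cone_and_count_general (h d : ℕ) (hd : 3 ≤ d) :
    (∀ (a : Fin (h + 1) → Fin d) (b : Equiv.Perm (Fin (2 * h + 2))),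
      ∀ x ∈ Lsub h d (fun e => (a e : ℕ)) b, ∑ e, x e ^ d = 0) ∧
    Set.ncard {W : Submodule ℂ (Fin (2 * h + 2) → ℂ) |
        ∃ (a : Fin (h + 1) → Fin d) (b : Equiv.Perm (Fin (2 * h + 2))),
          W = Lsub h d (fun e => (a e : ℕ)) b}
      = (∏ e : Fin (h + 1), (2 * (e : ℕ) + 1)) * d ^ (h + 1) := by
  have hζ := isPrimitiveRoot_zeta2d (d := d) (by omega)
  refine ⟨fun a b x hx => ?_, ?_⟩
  · rw [Lsub_eq_pairSubspace] at hx
    exact sum_pow_eq_zero_of_mem_pairSubspace (fun e => hζ.pow_odd_pow_eq_neg_one (a e)) hx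
  have hcount := ncard_range_pairSubspace_mul (ι := Fin (h + 1)) (κ := Fin (2 * h + 2))
    hζ.pow_odd_injective hζ.pow_odd_ne_zero hζ.pow_odd_rev
  rw [Fintype.card_equiv (pairIndex h), Fintype.card_prod, Fintype.card_fin, Fintype.card_fin,
    Fintype.card_fin, mul_two, ← two_mul, ← prod_odd_mul_factorial_mul_two_pow] at hcount
  rw [setOf_Lsub_eq_range_pairSubspace]
  refine Nat.eq_of_mul_eq_mul_right (by positivity) (hcount.trans ?_)
  ring

/-- Every `L_{a,b}` lies in the affine Fermat cone `{x : ∑ x_e^d = 0}`, and the number of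
distinct subspaces of the form `L_{a,b}` equals `(n+1)·(n−1)·⋯·3·1 · d^{n/2+1}`. -/
theorem linear_cycles_in_fermat_cone_and_count (h d : ℕ) (hh : 1 ≤ h) (hd : 3 ≤ d) :
    (∀ (a : Fin (h + 1) → Fin d) (b : Equiv.Perm (Fin (2 * h + 2))),
      ∀ x ∈ Lsub h d (fun e => (a e : ℕ)) b, ∑ e, x e ^ d = 0) ∧
    Set.ncard {W : Submodule ℂ (Fin (2 * h + 2) → ℂ) |
        ∃ (a : Fin (h + 1) → Fin d) (b : Equiv.Perm (Fin (2 * h + 2))),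
          W = Lsub h d (fun e => (a e : ℕ)) b}
      = (∏ e : Fin (h + 1), (2 * (e : ℕ) + 1)) * d ^ (h + 1) :=
  linear_cycles_in_fermat_cone_and_count_general h d hd
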